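/- For q > -1, υ a positive integer, Re(a) > 0 and |w/a| < 1 (or for any a > w > 0), the Laplace transform satisfies ∫_0^∞ e^{-ax} x^q M_n(p,q,υ; wx) dx = [(-1)^n Γ(υn+q+1) / a^{q+1}] Σ_{j=0}^n [(-n)_j (n+1-p)_{υj} / j!] (-w/a)^{υj}. -/

import Mathlib

open Finset MeasureTheory Real Filter

/-- Pochhammer symbol `(a)_k = a (a+1) ⋯ (a+k-1)` for a real `a`. -/
noncomputable def poch (a : ℝ) (k : ℕ) : ℝ := ∏ i ∈ Finset.range k, (a + i)

/-- Generalized binomial coefficient `C(a, j)` for real `a`. -/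
noncomputable def rchoose (a : ℝ) (j : ℕ) : ℝ := (-1 : ℝ) ^ j * poch (-a) j / j.factorial

/-- The finite orthogonal polynomials `M_n^{(p,q)}(x)`. -/
noncomputable def Mfin (p q : ℝ) (n : ℕ) (x : ℝ) : ℝ :=
  (-1 : ℝ) ^ n * n.factorial *
    ∑ j ∈ Finset.range (n + 1), rchoose (p - n - 1) j * rchoose (q + n) (n - j) * (-x) ^ j

/-- The first set of finite biorthogonal polynomials `M_n(p,q,υ;x)`. -/
noncomputable def Mbio (p q : ℝ) (υ n : ℕ) (x : ℝ) : ℝ :=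
  (-1 : ℝ) ^ n * poch (q + 1) (υ * n) *
    ∑ j ∈ Finset.range (n + 1), (-1 : ℝ) ^ j * (n.choose j : ℝ) *
      (poch (n + 1 - p) (υ * j) / poch (q + 1) (υ * j)) * (-x) ^ (υ * j)

/-- The second set of finite biorthogonal polynomials `𝔐_n(p,q,υ;x)`. -/
noncomputable def Mfrak (p q : ℝ) (υ n : ℕ) (x : ℝ) : ℝ :=
  ∑ r ∈ Finset.range (n + 1), ∑ s ∈ Finset.range (r + 1),
    (-1 : ℝ) ^ (s + n) * (r.choose s : ℝ) * (poch (p + q - n) r / r.factorial) *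
      poch ((s + q + 1) / υ) n * x ^ r * (1 + x) ^ (n - r)

lemma poch_succ (a : ℝ) (k : ℕ) : poch a (k + 1) = poch a k * (a + k) :=
  Finset.prod_range_succ _ _

lemma poch_pos {a : ℝ} (ha : 0 < a) (k : ℕ) : 0 < poch a k := by
  induction k with
  | zero => simp [poch]
  | succ k ih => rw [poch_succ]; positivity

lemma Gamma_poch {a : ℝ} (ha : 0 < a) (k : ℕ) :
    Real.Gamma (a + k) = poch a k * Real.Gamma a := by
  induction k with
  | zero => simp [poch]
  | succ k ih =>
    have : a + (k + 1 : ℕ) = (a + k) + 1 := by push_cast; ring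
    rw [this, Real.Gamma_add_one (by positivity), ih, poch_succ]; ring

lemma poch_neg_nat (n j : ℕ) (h : j ≤ n) :
    poch (-(n : ℝ)) j = (-1 : ℝ) ^ j * j.factorial * n.choose j := by
  induction j with
  | zero => simp [poch]
  | succ j ih =>
    have hj : j ≤ n := Nat.le_of_succ_le h
    rw [poch_succ, ih hj]
    have hcc : (n.choose (j+1) : ℝ) * (j+1) = (n.choose j : ℝ) * ((n:ℝ) - j) := by
      have := Nat.choose_succ_right_eq n j
      have hjn : (j : ℝ) ≤ (n : ℝ) := by exact_mod_cast hj
      have : ((n.choose (j+1) * (j+1) : ℕ) : ℝ) = ((n.choose j * (n - j) : ℕ) : ℝ) := by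
        exact_mod_cast congrArg Nat.cast this
      push_cast [Nat.cast_sub hj] at this
      linarith
    have h2 : (-(n:ℝ) + j) = -((n:ℝ) - j) := by ring
    rw [h2, pow_succ, Nat.factorial_succ]
    push_cast
    linear_combination (-(1:ℝ))^j * (j.factorial : ℝ) * hcc

lemma intg {s b : ℝ} (hs : -1 < s) (hb : 0 < b) :
    IntegrableOn (fun x : ℝ => x ^ s * Real.exp (-(b * x))) (Set.Ioi 0) := by
  have h := integrableOn_rpow_mul_exp_neg_mul_rpow (p := 1) hs one_pos hb
  refine h.congr_fun (fun x hx => ?_) measurableSet_Ioi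
  simp only [Real.rpow_one, neg_mul]

theorem laplace_transform_Mbio (p q a w : ℝ) (υ n : ℕ) (hq : q > -1) (hυ : 0 < υ)
    (ha : 0 < a) (hw : |w| < a) :
    ∫ x in Set.Ioi (0 : ℝ), Real.exp (-(a * x)) * x ^ q * Mbio p q υ n (w * x) =
      (-1 : ℝ) ^ n * Real.Gamma (υ * n + q + 1) / a ^ (q + 1) *
        ∑ j ∈ Finset.range (n + 1),
          poch (-(n : ℝ)) j * poch (n + 1 - p) (υ * j) / j.factorial * (-w / a) ^ (υ * j) := by
  have hq1 : (0:ℝ) < q + 1 := by linarith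
  set C : ℕ → ℝ := fun j => (-1:ℝ)^n * poch (q+1) (υ*n) * ((-1:ℝ)^j * (n.choose j : ℝ) *
      (poch (n+1-p) (υ*j) / poch (q+1) (υ*j)) * (-w)^(υ*j)) with hC
  have hpt : ∀ x ∈ Set.Ioi (0:ℝ),
      Real.exp (-(a * x)) * x ^ q * Mbio p q υ n (w * x) =
      ∑ j ∈ Finset.range (n+1),
        C j * (x ^ ((q + (υ*j : ℕ) + 1) - 1) * Real.exp (-(a*x))) := by
    intro x hx
    rw [Set.mem_Ioi] at hx
    simp only [Mbio, Finset.mul_sum, hC]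
    refine Finset.sum_congr rfl fun j _ => ?_
    have h1 : (-(w*x))^(υ*j) = (-w)^(υ*j) * x^(υ*j) := by
      rw [show -(w*x) = (-w)*x by ring, mul_pow]
    have h2 : x ^ ((q + (υ*j : ℕ) + 1) - 1) = x ^ q * x ^ (υ*j) := by
      rw [add_sub_cancel_right, Real.rpow_add hx, Real.rpow_natCast]
    rw [h1, h2]; ring
  rw [setIntegral_congr_fun measurableSet_Ioi hpt]
  rw [integral_finset_sum _ (fun j _ => by
    refine ((intg (by
      have : (0:ℝ) ≤ (υ*j : ℕ) := Nat.cast_nonneg _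
      linarith : (-1:ℝ) < (q + (υ*j : ℕ) + 1) - 1) ha).const_mul (C j)))]
  rw [Finset.mul_sum]
  refine Finset.sum_congr rfl fun j hj => ?_
  have hjn : j ≤ n := Nat.lt_succ_iff.mp (Finset.mem_range.mp hj)
  rw [integral_const_mul,
    integral_rpow_mul_exp_neg_mul_Ioi (by
      have : (0:ℝ) ≤ ((υ*j : ℕ) : ℝ) := Nat.cast_nonneg _
      linarith) ha]
  have hG1 : Real.Gamma (q + (υ*j : ℕ) + 1) = poch (q+1) (υ*j) * Real.Gamma (q+1) := by
    rw [show q + ((υ*j : ℕ):ℝ) + 1 = (q+1) + (υ*j : ℕ) by ring, Gamma_poch hq1]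
  have hG2 : Real.Gamma (↑υ * ↑n + q + 1) = poch (q+1) (υ*n) * Real.Gamma (q+1) := by
    rw [show (↑υ * ↑n + q + 1 : ℝ) = (q+1) + (υ*n : ℕ) by push_cast; ring, Gamma_poch hq1]
  have hA : ((1:ℝ)/a) ^ (q + (υ*j : ℕ) + 1) = (a^(q+1))⁻¹ * (a⁻¹)^(υ*j) := by
    rw [show q + ((υ*j : ℕ):ℝ) + 1 = (q+1) + (υ*j : ℕ) by ring, one_div,
      Real.rpow_add (by positivity), Real.rpow_natCast, Real.inv_rpow ha.le]
  have hW : (-w/a)^(υ*j) = (-w)^(υ*j) * (a⁻¹)^(υ*j) := by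
    rw [div_eq_mul_inv, mul_pow]
  rw [hC, hG1, hG2, hA, hW, poch_neg_nat n j hjn]
  have hpo : poch (q+1) (υ*j) ≠ 0 := (poch_pos hq1 _).ne'
  have hfa : (j.factorial : ℝ) ≠ 0 := Nat.cast_ne_zero.mpr j.factorial_ne_zero
  have han : a ^ (q+1) ≠ 0 := (Real.rpow_pos_of_pos ha _).ne'
  field_simp
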